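/- arXiv:2110.06791 — 5 statements merged into one kernel-verified Lean document; each statement's English description precedes it below -/
import Mathlib

section
/- For every real x > 0, the series ∑_{m=0}^∞ (−1)^m / (m! · Γ(m+1)) · (x/2)^{2m} equals (1/(π x)) · ∫_0^π ( sin(x·sin φ) + x·sin φ · cos(x·sin φ) ) · sin φ dφ. -/
/-!
Expanding `cos (x sin φ)` in its power series and integrating term by term with Wallis'
formula for `∫₀^π sin^(2m)` gives `π J₀(x) = ∫₀^π cos (x sin φ) dφ`. The integrand of the theorem
is `x cos (x sin φ)` plus the derivative of `-cos φ · sin (x sin φ)`, which vanishes at `0` and `π`.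
-/

open Real MeasureTheory Finset

theorem prod_range_odd_div_even (n : ℕ) :
    ∏ i ∈ range n, (2 * (i : ℝ) + 1) / (2 * i + 2)
      = (2 * n).factorial / (4 ^ n * (n.factorial : ℝ) ^ 2) := by
  induction n with
  | zero => simp
  | succ n ih =>
    rw [prod_range_succ, ih, show 2 * (n + 1) = 2 * n + 1 + 1 by ring, Nat.factorial_succ,
      Nat.factorial_succ, Nat.factorial_succ]
    push_cast
    field_simp
    ring

theorem integral_sin_pow_even_eq_factorial (n : ℕ) :
    ∫ φ in (0:ℝ)..π, sin φ ^ (2 * n)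
      = π * ((2 * n).factorial / (4 ^ n * (n.factorial : ℝ) ^ 2)) := by
  rw [integral_sin_pow_even, prod_range_odd_div_even]

theorem integral_cos_series_term_sin (x : ℝ) (m : ℕ) :
    ∫ φ in (0:ℝ)..π, (-1) ^ m * (x * sin φ) ^ (2 * m) / (2 * m).factorial
      = π * ((-1) ^ m / (m.factorial * m.factorial) * (x / 2) ^ (2 * m)) := by
  have hx : (x / 2) ^ (2 * m) = x ^ (2 * m) / 4 ^ m := by
    rw [div_pow, pow_mul 2 2]; norm_num
  simp_rw [mul_pow, mul_div_right_comm, ← mul_assoc]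
  rw [intervalIntegral.integral_const_mul, integral_sin_pow_even_eq_factorial, hx]
  field_simp

theorem hasSum_integral_cos_mul_sin (x : ℝ) :
    HasSum (fun m : ℕ => π * ((-1) ^ m / (m.factorial * m.factorial) * (x / 2) ^ (2 * m)))
      (∫ φ in (0:ℝ)..π, cos (x * sin φ)) := by
  simp_rw [← integral_cos_series_term_sin]
  refine intervalIntegral.hasSum_integral_of_dominated_convergence
    (fun m _ => |x| ^ (2 * m) / (2 * m).factorial) (fun m => by fun_prop)
    (fun m => ae_of_all _ fun φ _ => ?_) (ae_of_all _ fun _ _ => ?_) intervalIntegrable_const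
    (ae_of_all _ fun φ _ => hasSum_cos _)
  · rw [norm_div, norm_mul, norm_pow, norm_neg, norm_one, one_pow, one_mul, norm_pow, norm_mul,
      RCLike.norm_natCast]
    gcongr
    exact mul_le_of_le_one_right (norm_nonneg x) (abs_sin_le_one φ)
  · exact (summable_pow_div_factorial |x|).comp_injective (mul_right_injective₀ two_ne_zero)

theorem integral_sin_add_mul_cos_mul_sin (x : ℝ) :
    ∫ φ in (0:ℝ)..π, (sin (x * sin φ) + x * sin φ * cos (x * sin φ)) * sin φ
      = x * ∫ φ in (0:ℝ)..π, cos (x * sin φ) := by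
  have hderiv : ∀ φ : ℝ, HasDerivAt (fun φ => -cos φ * sin (x * sin φ))
      ((sin (x * sin φ) + x * sin φ * cos (x * sin φ)) * sin φ - x * cos (x * sin φ)) φ := by
    intro φ
    have h := (hasDerivAt_cos φ).neg.mul
      ((hasDerivAt_sin _).comp φ ((hasDerivAt_sin φ).const_mul x))
    refine h.congr_deriv ?_
    simp only [Pi.neg_apply, Function.comp_apply]
    linear_combination (-x * cos (x * sin φ)) * sin_sq_add_cos_sq φ
  have hFTC := intervalIntegral.integral_eq_sub_of_hasDerivAt (fun φ _ => hderiv φ)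
    (Continuous.intervalIntegrable (by fun_prop) 0 π)
  rw [intervalIntegral.integral_sub (Continuous.intervalIntegrable (by fun_prop) 0 π)
    (Continuous.intervalIntegrable (by fun_prop) 0 π), intervalIntegral.integral_const_mul] at hFTC
  simp only [sin_pi, sin_zero, mul_zero, sub_self] at hFTC
  linarith

theorem bessel_J0_integral_representation (x : ℝ) (hx : 0 < x) :
    ∑' m : ℕ, (-1) ^ m / (m.factorial * Real.Gamma (m + 1)) * (x / 2) ^ (2 * m)
      = (1 / (π * x)) *
        ∫ φ in (0:ℝ)..π,
          (Real.sin (x * Real.sin φ) + x * Real.sin φ * Real.cos (x * Real.sin φ)) *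
            Real.sin φ := by
  have hsum := (hasSum_integral_cos_mul_sin x).tsum_eq
  rw [tsum_mul_left] at hsum
  simp_rw [Gamma_nat_eq_factorial]
  rw [integral_sin_add_mul_cos_mul_sin, ← hsum]
  field_simp
end

section
/- For every real α > 0 and every real x > 0, ∑_{m=0}^∞ (−1)^m/(m!·Γ(m+α+1))·(x/2)^{2m+α} = (1/Γ(α))·(x/2)^α · ∫_0^1 J_0(x·√(1−t))·t^{α−1} dt, where J_0(y) = ∑_{m=0}^∞ (−1)^m/(m!·Γ(m+1))·(y/2)^{2m}. -/
open Real MeasureTheory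

/-- The Bessel function of the first kind of order 0, defined by its series. -/
noncomputable def besselJ0 (y : ℝ) : ℝ :=
  ∑' m : ℕ, (-1) ^ m / (m.factorial * Real.Gamma (m + 1)) * (y / 2) ^ (2 * m)

lemma beta_nat_real (α : ℝ) (hα : 0 < α) (m : ℕ) :
    ∫ t in (0:ℝ)..1, (1 - t) ^ m * t ^ (α - 1) =
      Real.Gamma α * m.factorial / Real.Gamma (α + m + 1) := by
  have hs : (0:ℝ) < (α : ℂ).re := by simpa using hα
  have ht : (0:ℝ) < ((m : ℂ) + 1).re := by
    simp only [Complex.add_re, Complex.natCast_re, Complex.one_re]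
    positivity
  have key := Complex.Gamma_mul_Gamma_eq_betaIntegral hs ht
  have hB : Complex.betaIntegral (α : ℂ) ((m : ℂ) + 1)
      = ((∫ t in (0:ℝ)..1, (1 - t) ^ m * t ^ (α - 1) : ℝ) : ℂ) := by
    rw [Complex.betaIntegral, ← intervalIntegral.integral_ofReal]
    refine intervalIntegral.integral_congr fun t htt => ?_
    rw [Set.uIcc_of_le (by norm_num : (0:ℝ) ≤ 1)] at htt
    obtain ⟨ht0, ht1⟩ := htt
    have h1t : (0:ℝ) ≤ 1 - t := by linarith
    have e1 : ((t : ℂ)) ^ ((α : ℂ) - 1) = ((t ^ (α - 1) : ℝ) : ℂ) := by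
      rw [Complex.ofReal_cpow ht0]
      push_cast
      ring_nf
    have e2 : ((1 : ℂ) - t) ^ ((m : ℂ) + 1 - 1) = (((1 - t) ^ m : ℝ) : ℂ) := by
      rw [add_sub_cancel_right, Complex.cpow_natCast]
      push_cast
      ring_nf
    rw [e1, e2]
    push_cast
    ring
  rw [hB] at key
  have hgam : ((m : ℂ) + 1) = ((m + 1 : ℝ) : ℂ) := by push_cast; ring
  rw [hgam] at key
  have hgam2 : ((α : ℂ) + ((m + 1 : ℝ) : ℂ)) = ((α + m + 1 : ℝ) : ℂ) := by
    push_cast; ring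
  rw [hgam2, Complex.Gamma_ofReal, Complex.Gamma_ofReal, Complex.Gamma_ofReal,
    ← Complex.ofReal_mul, ← Complex.ofReal_mul] at key
  have key' : Real.Gamma α * Real.Gamma ((m : ℝ) + 1)
      = Real.Gamma (α + m + 1) * ∫ t in (0:ℝ)..1, (1 - t) ^ m * t ^ (α - 1) := by
    exact_mod_cast key
  have hfact : Real.Gamma ((m : ℝ) + 1) = m.factorial := Real.Gamma_nat_eq_factorial m
  have hne : Real.Gamma (α + m + 1) ≠ 0 := by
    have : (0:ℝ) < α + m + 1 := by positivity
    exact (Real.Gamma_pos_of_pos this).ne'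
  rw [hfact] at key'
  field_simp
  linarith [key']

theorem bessel_J_integral_representation' (α x : ℝ) (hα : 0 < α) (hx : 0 < x) :
    ∑' m : ℕ, (-1) ^ m / (m.factorial * Real.Gamma (m + α + 1)) *
        (x / 2) ^ (2 * (m : ℝ) + α)
      = (1 / Real.Gamma α) * (x / 2) ^ α *
        ∫ t in (0:ℝ)..1, besselJ0 (x * Real.sqrt (1 - t)) * t ^ (α - 1) := by
  set c := x / 2 with hc
  have hc0 : 0 < c := by positivity
  set g : ℕ → ℝ → ℝ := fun m t =>
    ((-1) ^ m / (m.factorial * m.factorial)) * c ^ (2 * m) * ((1 - t) ^ m * t ^ (α - 1))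
    with hg
  have hrint : IntegrableOn (fun t : ℝ => t ^ (α - 1)) (Set.Ioc (0:ℝ) 1) :=
    (intervalIntegral.intervalIntegrable_rpow' (by linarith)).1
  have hmeas : ∀ m : ℕ, Measurable (g m) := by
    intro m
    simp only [hg]
    fun_prop
  have hgi : ∀ m : ℕ, IntegrableOn (g m) (Set.Ioc (0:ℝ) 1) := by
    intro m
    have hC : IntegrableOn (fun t : ℝ =>
        |(-1:ℝ) ^ m / (m.factorial * m.factorial) * c ^ (2*m)| * t ^ (α - 1))
        (Set.Ioc (0:ℝ) 1) := hrint.const_mul _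
    refine Integrable.mono hC (hmeas m).aestronglyMeasurable ?_
    filter_upwards [ae_restrict_mem measurableSet_Ioc] with t htt
    obtain ⟨ht0, ht1⟩ := htt
    have h1t : (0:ℝ) ≤ 1 - t := by linarith
    have htr : (0:ℝ) ≤ t ^ (α - 1) := Real.rpow_nonneg ht0.le _
    have h1 : (1 - t) ^ m ≤ 1 := pow_le_one₀ h1t (by linarith)
    simp only [hg, Real.norm_eq_abs]
    rw [abs_of_nonneg (mul_nonneg (abs_nonneg _) htr), abs_mul,
      abs_of_nonneg (mul_nonneg (pow_nonneg h1t m) htr)]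
    have hterm : (1 - t) ^ m * t ^ (α - 1) ≤ t ^ (α - 1) := by
      calc (1 - t) ^ m * t ^ (α - 1) ≤ 1 * t ^ (α - 1) :=
            mul_le_mul_of_nonneg_right h1 htr
        _ = t ^ (α - 1) := one_mul _
    exact mul_le_mul_of_nonneg_left hterm (abs_nonneg _)
  have hrval : ∫ t in Set.Ioc (0:ℝ) 1, t ^ (α - 1) = 1 / α := by
    rw [← intervalIntegral.integral_of_le (by norm_num : (0:ℝ) ≤ 1)]
    rw [integral_rpow (Or.inl (by linarith))]
    rw [sub_add_cancel, Real.one_rpow, Real.zero_rpow hα.ne']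
    ring
  have hsum : Summable fun m : ℕ => ∫ t in Set.Ioc (0:ℝ) 1, ‖g m t‖ := by
    have hb : Summable fun m : ℕ => (c ^ 2) ^ m / m.factorial * (1 / α) :=
      (Real.summable_pow_div_factorial (c ^ 2)).mul_right _
    refine Summable.of_nonneg_of_le (fun m => integral_nonneg fun t => norm_nonneg _)
      (fun m => ?_) hb
    have hle : ∀ᵐ t ∂(volume.restrict (Set.Ioc (0:ℝ) 1)),
        ‖g m t‖ ≤ (c ^ 2) ^ m / m.factorial * t ^ (α - 1) := by
      filter_upwards [ae_restrict_mem measurableSet_Ioc] with t htt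
      obtain ⟨ht0, ht1⟩ := htt
      have h1t : (0:ℝ) ≤ 1 - t := by linarith
      have htr : (0:ℝ) ≤ t ^ (α - 1) := Real.rpow_nonneg ht0.le _
      have h1 : (1 - t) ^ m ≤ 1 := pow_le_one₀ h1t (by linarith)
      have hf1 : (1:ℝ) ≤ m.factorial := by exact_mod_cast m.factorial_pos
      have hpow : c ^ (2 * m) = (c ^ 2) ^ m := by rw [pow_mul]
      simp only [hg, Real.norm_eq_abs, abs_mul, abs_div, abs_pow, abs_neg, abs_one,
        one_pow, Nat.abs_cast, abs_of_nonneg (pow_nonneg h1t m), abs_of_nonneg htr,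
        abs_of_nonneg hc0.le]
      have step1 : (1:ℝ) / ((m.factorial : ℝ) * m.factorial) ≤ 1 / m.factorial := by
        apply div_le_div_of_nonneg_left one_pos.le
        · exact_mod_cast m.factorial_pos
        · nlinarith
      calc 1 / ((m.factorial : ℝ) * m.factorial) * c ^ (2*m) * ((1 - t) ^ m * t ^ (α - 1))
          ≤ 1 / (m.factorial : ℝ) * c ^ (2*m) * (1 * t ^ (α - 1)) := by
            apply mul_le_mul
            · exact mul_le_mul_of_nonneg_right step1 (by positivity)
            · exact mul_le_mul_of_nonneg_right h1 htr
            · positivity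
            · positivity
        _ = (c ^ 2) ^ m / m.factorial * t ^ (α - 1) := by rw [← hpow]; ring
    calc ∫ t in Set.Ioc (0:ℝ) 1, ‖g m t‖
        ≤ ∫ t in Set.Ioc (0:ℝ) 1, (c ^ 2) ^ m / m.factorial * t ^ (α - 1) :=
          integral_mono_ae (hgi m).norm (hrint.const_mul _) hle
      _ = (c ^ 2) ^ m / m.factorial * (1 / α) := by
          rw [integral_const_mul, hrval]
  have hpt : ∀ t ∈ Set.Ioc (0:ℝ) 1,
      besselJ0 (x * Real.sqrt (1 - t)) * t ^ (α - 1) = ∑' m, g m t := by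
    intro t htt
    obtain ⟨ht0, ht1⟩ := htt
    have h1t : (0:ℝ) ≤ 1 - t := by linarith
    rw [besselJ0, ← tsum_mul_right]
    refine tsum_congr fun m => ?_
    have hfact : Real.Gamma ((m : ℝ) + 1) = m.factorial := Real.Gamma_nat_eq_factorial m
    have hsq : (x * Real.sqrt (1 - t) / 2) ^ (2 * m) = c ^ (2 * m) * (1 - t) ^ m := by
      have h : x * Real.sqrt (1 - t) / 2 = c * Real.sqrt (1 - t) := by rw [hc]; ring
      rw [h, mul_pow, pow_mul (Real.sqrt (1 - t)), Real.sq_sqrt h1t]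
    rw [hfact, hsq, hg]
    ring
  have hIoc : (∫ t in (0:ℝ)..1, besselJ0 (x * Real.sqrt (1 - t)) * t ^ (α - 1))
      = ∑' m, ∫ t in Set.Ioc (0:ℝ) 1, g m t := by
    rw [intervalIntegral.integral_of_le (by norm_num : (0:ℝ) ≤ 1)]
    rw [setIntegral_congr_fun measurableSet_Ioc hpt]
    exact (integral_tsum_of_summable_integral_norm hgi hsum).symm
  have hval : ∀ m : ℕ, ∫ t in Set.Ioc (0:ℝ) 1, g m t
      = ((-1) ^ m / (m.factorial * m.factorial)) * c ^ (2 * m) *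
        (Real.Gamma α * m.factorial / Real.Gamma (α + m + 1)) := by
    intro m
    rw [← intervalIntegral.integral_of_le (by norm_num : (0:ℝ) ≤ 1)]
    simp only [hg]
    rw [intervalIntegral.integral_const_mul, beta_nat_real α hα m]
  rw [hIoc]
  simp_rw [hval]
  rw [← tsum_mul_left]
  refine tsum_congr fun m => ?_
  have hΓα : Real.Gamma α ≠ 0 := (Real.Gamma_pos_of_pos hα).ne'
  have hΓ : Real.Gamma (α + m + 1) ≠ 0 := by
    have : (0:ℝ) < α + m + 1 := by positivity
    exact (Real.Gamma_pos_of_pos this).ne'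
  have hmαswap : (m : ℝ) + α + 1 = α + m + 1 := by ring
  have hfne : ((m.factorial : ℝ)) ≠ 0 := by exact_mod_cast m.factorial_pos.ne'
  have hrpow : c ^ (2 * (m : ℝ) + α) = c ^ (2 * m) * c ^ α := by
    rw [Real.rpow_add hc0, show (2 * (m:ℝ)) = ((2*m : ℕ) : ℝ) by push_cast; ring,
      Real.rpow_natCast]
  rw [hmαswap, hrpow]
  field_simp
end

section
/- For every real α > 0 and every real x > 0, ∑_{m=0}^∞ (−1)^m/(m!·Γ(m+α+1))·(x/2)^{2m+α} = (1/(π x Γ(α)))·(x/2)^α · ∫_0^{π/2} ∫_0^π 2·(sin ϑ)^{2α−1}·sin φ · [ sin(x·cos ϑ·sin φ) + x·cos ϑ·sin φ·cos(x·cos ϑ·sin φ) ] dφ dϑ. -/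
open Real MeasureTheory

/-!
Expand `sin u + u cos u = ∑ (-1)^m (2m+2)/(2m+1)! u^(2m+1)` at `u = x cos ϑ sin φ` and integrate
term by term; the series for `sinh u + u cosh u` dominates. The `φ`-integrals are Wallis integrals,
`(2m+2)/(2m+1)! ∫₀^π sin^(2m+2) = π / (4^m m!²)`, and the `ϑ`-integrals are Beta integrals,
`∫₀^{π/2} sin^(2α-1) cos^(2m+1) = Γ(α) m! / (2 Γ(m+α+1))`, computed by the reduction formula in the
power of `cos`.
-/

lemma two_mul_add_two_div_factorial_mul_pow (m : ℕ) (u : ℝ) :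
    (2 * m + 2) / (2 * m + 1).factorial * u ^ (2 * m + 1)
      = u ^ (2 * m + 1) / (2 * m + 1).factorial + u * (u ^ (2 * m) / (2 * m).factorial) := by
  rw [Nat.factorial_succ]
  push_cast
  field_simp
  ring

lemma hasSum_sin_add_mul_cos (u : ℝ) :
    HasSum (fun m : ℕ => (-1) ^ m * ((2 * m + 2) / (2 * m + 1).factorial * u ^ (2 * m + 1)))
      (sin u + u * cos u) := by
  convert (hasSum_sin u).add ((hasSum_cos u).mul_left u) using 2 with m
  rw [two_mul_add_two_div_factorial_mul_pow]
  ring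

lemma hasSum_sinh_add_mul_cosh (u : ℝ) :
    HasSum (fun m : ℕ => (2 * m + 2) / (2 * m + 1).factorial * u ^ (2 * m + 1))
      (sinh u + u * cosh u) := by
  simpa only [two_mul_add_two_div_factorial_mul_pow] using
    (hasSum_sinh u).add ((hasSum_cosh u).mul_left u)

lemma integral_sin_pow_two_mul (n : ℕ) :
    ∫ x in 0..π, sin x ^ (2 * n)
      = π * (2 * n).factorial / (4 ^ n * (n.factorial : ℝ) ^ 2) := by
  induction n with
  | zero => simp
  | succ n ih =>
    rw [Nat.mul_succ, integral_sin_pow, ih, Nat.factorial_succ, Nat.factorial_succ,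
      Nat.factorial_succ]
    simp only [sin_zero, sin_pi]
    push_cast
    field_simp
    ring

lemma two_mul_add_two_div_factorial_mul_integral_sin_pow (m : ℕ) :
    (2 * m + 2) / (2 * m + 1).factorial * ∫ x in 0..π, sin x ^ (2 * m + 2)
      = π / (4 ^ m * (m.factorial : ℝ) ^ 2) := by
  rw [show 2 * m + 2 = 2 * (m + 1) by ring, integral_sin_pow_two_mul,
    show 2 * (m + 1) = 2 * m + 1 + 1 by ring, Nat.factorial_succ (2 * m + 1), Nat.factorial_succ m]
  push_cast
  field_simp
  ring

lemma hasSum_integral_sin_mul_sin_add_mul_cos (c : ℝ) :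
    HasSum (fun m : ℕ => (-1) ^ m * c ^ (2 * m + 1) * (π / (4 ^ m * (m.factorial : ℝ) ^ 2)))
      (∫ t in 0..π, sin t * (sin (c * sin t) + c * sin t * cos (c * sin t))) := by
  set w : ℕ → ℝ := fun m => (2 * m + 2) / (2 * m + 1).factorial
  have hw : ∀ m, 0 ≤ w m := fun m => by positivity
  have key := intervalIntegral.hasSum_integral_of_dominated_convergence
    (μ := volume) (a := 0) (b := π)
    (F := fun m t => sin t * ((-1) ^ m * (w m * (c * sin t) ^ (2 * m + 1))))
    (fun m _ => w m * |c| ^ (2 * m + 1))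
    (fun m => (by fun_prop : Continuous _).aestronglyMeasurable)
    (fun m => ae_of_all _ fun t _ => by
      have h1 : |sin t| ^ (2 * m + 2) ≤ 1 := pow_le_one₀ (abs_nonneg _) (abs_sin_le_one t)
      have h2 : 0 ≤ w m * |c| ^ (2 * m + 1) := by positivity
      calc ‖sin t * ((-1) ^ m * (w m * (c * sin t) ^ (2 * m + 1)))‖
          = w m * |c| ^ (2 * m + 1) * |sin t| ^ (2 * m + 2) := by
            simp only [norm_mul, norm_pow, norm_neg, norm_one, one_pow, one_mul, Real.norm_eq_abs,
              abs_of_nonneg (hw m)]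
            ring
        _ ≤ w m * |c| ^ (2 * m + 1) := mul_le_of_le_one_right h2 h1)
    (ae_of_all _ fun _ _ => (hasSum_sinh_add_mul_cosh |c|).summable)
    intervalIntegrable_const
    (ae_of_all _ fun t _ => (hasSum_sin_add_mul_cos (c * sin t)).mul_left (sin t))
  refine key.congr_fun fun m => ?_
  rw [← two_mul_add_two_div_factorial_mul_integral_sin_pow,
    ← intervalIntegral.integral_const_mul, ← intervalIntegral.integral_const_mul]
  congr 1 with t
  ring

lemma hasDerivAt_sin_rpow_add_one (p : ℝ) {θ : ℝ} (hθ : 0 < sin θ) :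
    HasDerivAt (fun θ => sin θ ^ (p + 1)) ((p + 1) * (sin θ ^ p * cos θ)) θ := by
  convert (hasDerivAt_sin θ).rpow_const (p := p + 1) (Or.inl hθ.ne') using 1
  rw [add_sub_cancel_right]
  ring

lemma continuous_sin_rpow {q : ℝ} (hq : 0 ≤ q) : Continuous fun θ => sin θ ^ q :=
  continuous_sin.rpow_const fun _ => Or.inr hq

lemma sin_pos_of_mem_Ioo_zero_pi_div_two {θ : ℝ} (hθ : θ ∈ Set.Ioo 0 (π / 2)) : 0 < sin θ :=
  sin_pos_of_pos_of_lt_pi hθ.1 (by linarith [hθ.2, pi_pos])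

lemma intervalIntegrable_sin_rpow_mul_cos {p : ℝ} (hp : -1 < p) :
    IntervalIntegrable (fun θ => sin θ ^ p * cos θ) volume 0 (π / 2) := by
  have hderiv := intervalIntegral.integrableOn_deriv_of_nonneg (a := 0) (b := π / 2)
    (continuous_sin_rpow (q := p + 1) (by linarith)).continuousOn
    (fun θ hθ => hasDerivAt_sin_rpow_add_one p (sin_pos_of_mem_Ioo_zero_pi_div_two hθ))
    (fun θ hθ => by
      have := (sin_pos_of_mem_Ioo_zero_pi_div_two hθ).le
      have := cos_nonneg_of_mem_Icc ⟨by linarith [hθ.1, pi_pos], hθ.2.le⟩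
      have : (0 : ℝ) < p + 1 := by linarith
      positivity)
  have := ((intervalIntegrable_iff_integrableOn_Ioc_of_le (by positivity)).2 hderiv).const_mul
    (p + 1)⁻¹
  simpa [(show p + 1 ≠ 0 by linarith)] using this

lemma integral_sin_rpow_mul_cos {p : ℝ} (hp : -1 < p) :
    ∫ θ in 0..π / 2, sin θ ^ p * cos θ = 1 / (p + 1) := by
  have hftc := intervalIntegral.integral_eq_sub_of_hasDerivAt_of_le (a := 0) (b := π / 2)
    (by positivity) (continuous_sin_rpow (q := p + 1) (by linarith)).continuousOn
    (fun θ hθ => hasDerivAt_sin_rpow_add_one p (sin_pos_of_mem_Ioo_zero_pi_div_two hθ))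
    ((intervalIntegrable_sin_rpow_mul_cos hp).const_mul (p + 1))
  rw [intervalIntegral.integral_const_mul, sin_pi_div_two, sin_zero, one_rpow,
    zero_rpow (by linarith)] at hftc
  field_simp [(show p + 1 ≠ 0 by linarith)]
  linarith

lemma intervalIntegrable_sin_rpow_mul_cos_pow {p : ℝ} (hp : -1 < p) (k : ℕ) :
    IntervalIntegrable (fun θ => sin θ ^ p * cos θ ^ (k + 1)) volume 0 (π / 2) := by
  simpa only [pow_succ', mul_assoc, Pi.pow_apply] using
    (intervalIntegrable_sin_rpow_mul_cos hp).mul_continuousOn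
      (continuous_cos.pow k).continuousOn

lemma integral_sin_rpow_mul_cos_pow_add_three {p : ℝ} (hp : -1 < p) (k : ℕ) :
    (p + k + 3) * ∫ θ in 0..π / 2, sin θ ^ p * cos θ ^ (k + 3)
      = (k + 2) * ∫ θ in 0..π / 2, sin θ ^ p * cos θ ^ (k + 1) := by
  have hderiv : ∀ θ ∈ Set.Ioo 0 (π / 2),
      HasDerivAt (fun θ => sin θ ^ (p + 1) * cos θ ^ (k + 2))
      ((p + k + 3) * (sin θ ^ p * cos θ ^ (k + 3)) - (k + 2) * (sin θ ^ p * cos θ ^ (k + 1)))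
      θ := by
    intro θ hθ
    have hsin := sin_pos_of_mem_Ioo_zero_pi_div_two hθ
    refine ((hasDerivAt_sin_rpow_add_one p hsin).mul
      ((hasDerivAt_cos θ).fun_pow (k + 2))).congr_deriv ?_
    have hsin_sq : sin θ ^ (p + 1) * sin θ = sin θ ^ p * (1 - cos θ ^ 2) := by
      rw [rpow_add_one hsin.ne', ← sin_sq]
      ring
    rw [show k + 2 - 1 = k + 1 by omega]
    push_cast
    linear_combination -(k + 2 : ℝ) * cos θ ^ (k + 1) * hsin_sq
  have hftc := intervalIntegral.integral_eq_sub_of_hasDerivAt_of_le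
    (f := fun θ => sin θ ^ (p + 1) * cos θ ^ (k + 2)) (by positivity)
    ((continuous_sin_rpow (q := p + 1) (by linarith)).mul (continuous_cos.pow _)).continuousOn
    hderiv
    (((intervalIntegrable_sin_rpow_mul_cos_pow hp (k + 2)).const_mul _).sub
      ((intervalIntegrable_sin_rpow_mul_cos_pow hp k).const_mul _))
  rw [intervalIntegral.integral_sub
      ((intervalIntegrable_sin_rpow_mul_cos_pow hp (k + 2)).const_mul _)
      ((intervalIntegrable_sin_rpow_mul_cos_pow hp k).const_mul _),
    intervalIntegral.integral_const_mul, intervalIntegral.integral_const_mul, cos_pi_div_two,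
    sin_zero, zero_rpow (by linarith)] at hftc
  simpa [sub_eq_zero] using hftc

lemma integral_sin_rpow_mul_cos_pow_two_mul_add_one {α : ℝ} (hα : 0 < α) (m : ℕ) :
    ∫ θ in 0..π / 2, sin θ ^ (2 * α - 1) * cos θ ^ (2 * m + 1)
      = Gamma α * m.factorial / (2 * Gamma (m + α + 1)) := by
  have hΓ := (Gamma_pos_of_pos hα).ne'
  induction m with
  | zero =>
    simp only [mul_zero, zero_add, pow_one, Nat.cast_zero, Nat.factorial_zero, Nat.cast_one]
    rw [integral_sin_rpow_mul_cos (by linarith), Gamma_add_one hα.ne']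
    field_simp
    ring
  | succ m ih =>
    have hstep := integral_sin_rpow_mul_cos_pow_add_three (p := 2 * α - 1) (by linarith) (2 * m)
    rw [show 2 * m + 3 = 2 * (m + 1) + 1 by ring, ih] at hstep
    have hpos : 0 < 2 * α - 1 + (2 * m : ℕ) + 3 := by push_cast; linarith
    have hΓm : Gamma (m + α + 1) ≠ 0 := (Gamma_pos_of_pos (by positivity)).ne'
    apply mul_left_cancel₀ hpos.ne'
    rw [hstep, Nat.factorial_succ, Nat.cast_succ,
      show (m + 1 : ℝ) + α + 1 = (m + α + 1) + 1 by ring,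
      Gamma_add_one (s := m + α + 1) (by positivity)]
    push_cast
    field_simp
    ring

lemma summable_pow_div_factorial_sq (y : ℝ) :
    Summable fun m : ℕ => y ^ m / (m.factorial : ℝ) ^ 2 := by
  refine (Real.summable_pow_div_factorial |y|).of_norm_bounded fun m => ?_
  have hm : (1 : ℝ) ≤ m.factorial := by exact_mod_cast m.factorial_pos
  rw [norm_div, norm_pow, norm_pow, Real.norm_eq_abs, Real.norm_natCast, sq]
  exact div_le_div_of_nonneg_left (by positivity) (by positivity)
    (le_mul_of_one_le_left (by positivity) hm)

lemma hasSum_bessel_double_integral (α x : ℝ) (hα : 0 < α) :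
    HasSum (fun m : ℕ => π * x * Gamma α *
        ((-1) ^ m / (m.factorial * Gamma (m + α + 1)) * (x / 2) ^ (2 * m)))
      (∫ θ in 0..π / 2, ∫ t in 0..π,
        2 * sin θ ^ (2 * α - 1) * sin t *
          (sin (x * cos θ * sin t) + x * cos θ * sin t * cos (x * cos θ * sin t))) := by
  set d : ℕ → ℝ := fun m => 2 * π * x * ((-(x ^ 2 / 4)) ^ m / (m.factorial : ℝ) ^ 2)
  have hd : Summable d := (summable_pow_div_factorial_sq _).mul_left _
  have hneg (m : ℕ) : (-(x ^ 2 / 4)) ^ m = (-1) ^ m * (x ^ (2 * m) / 4 ^ m) := by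
    rw [neg_pow, div_pow, ← pow_mul]
  have hp : -1 < 2 * α - 1 := by linarith
  have hIoc : Set.uIoc 0 (π / 2) = Set.Ioc 0 (π / 2) := Set.uIoc_of_le (by positivity)
  have key := intervalIntegral.hasSum_integral_of_dominated_convergence (μ := volume)
    (a := 0) (b := π / 2) (F := fun m θ => d m * (sin θ ^ (2 * α - 1) * cos θ ^ (2 * m + 1)))
    (fun m θ => |d m| * (sin θ ^ (2 * α - 1) * cos θ))
    (fun m => (intervalIntegrable_iff.1
      ((intervalIntegrable_sin_rpow_mul_cos_pow hp (2 * m)).const_mul (d m))).aestronglyMeasurable)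
    (fun m => ae_of_all _ fun θ hθ => by
      rw [hIoc] at hθ
      have hsin : 0 ≤ sin θ :=
        sin_nonneg_of_nonneg_of_le_pi hθ.1.le (by linarith [hθ.2, pi_pos])
      have hcos : 0 ≤ cos θ := cos_nonneg_of_mem_Icc ⟨by linarith [hθ.1, pi_pos], hθ.2⟩
      rw [norm_mul, Real.norm_eq_abs, Real.norm_of_nonneg (by positivity)]
      gcongr
      exact pow_le_of_le_one hcos (cos_le_one θ) (by omega))
    (ae_of_all _ fun θ _ => hd.abs.mul_right _)
    (by
      simp only [tsum_mul_right]
      exact (intervalIntegrable_sin_rpow_mul_cos hp).const_mul _)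
    (ae_of_all _ fun θ _ => by
      have h := (hasSum_integral_sin_mul_sin_add_mul_cos (x * cos θ)).mul_left
        (2 * sin θ ^ (2 * α - 1))
      simp only [← intervalIntegral.integral_const_mul, ← mul_assoc] at h
      refine h.congr_fun fun m => ?_
      simp only [d, hneg]
      ring)
  refine key.congr_fun fun m => ?_
  have hΓ : Gamma (m + α + 1) ≠ 0 := (Gamma_pos_of_pos (by positivity)).ne'
  rw [intervalIntegral.integral_const_mul, integral_sin_rpow_mul_cos_pow_two_mul_add_one hα]
  simp only [d, hneg]
  rw [div_pow, show (2 : ℝ) ^ (2 * m) = 4 ^ m by rw [pow_mul]; norm_num]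
  field_simp

theorem bessel_J_double_integral_representation (α x : ℝ) (hα : 0 < α) (hx : 0 < x) :
    ∑' m : ℕ, (-1) ^ m / (m.factorial * Real.Gamma (m + α + 1)) *
        (x / 2) ^ (2 * (m : ℝ) + α)
      = (1 / (π * x * Real.Gamma α)) * (x / 2) ^ α *
        ∫ ϑ in (0:ℝ)..(π / 2), ∫ φ in (0:ℝ)..π,
          2 * Real.sin ϑ ^ (2 * α - 1) * Real.sin φ *
            (Real.sin (x * Real.cos ϑ * Real.sin φ) +
              x * Real.cos ϑ * Real.sin φ * Real.cos (x * Real.cos ϑ * Real.sin φ)) := by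
  have hΓ : Gamma α ≠ 0 := (Gamma_pos_of_pos hα).ne'
  rw [← (hasSum_bessel_double_integral α x hα).tsum_eq, ← tsum_mul_left]
  refine tsum_congr fun m => ?_
  rw [rpow_add (by positivity), show 2 * (m : ℝ) = (2 * m : ℕ) by push_cast; ring, rpow_natCast]
  field_simp
end

section
/- For all real a > 0 and b > 0, (1/(π b)) · ∫_0^π arctan( (b·sin φ)/a ) · sin φ dφ + (1/π) · ∫_0^π (a·sin²φ)/(b²·sin²φ + a²) dφ = 1/√(a² + b²). -/
/-!
Integrating by parts against `sin φ = (-cos φ)'` turns the arctan integral into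
`b ∫₀^π a cos²φ / (b² sin²φ + a²) dφ`, so by `cos² + sin² = 1` the left-hand side is
`(1/π) ∫₀^π a / (b² sin²φ + a²) dφ`. With `r = √(a² + b²) / a` this integrand is
`r / (1 + (r² - 1) sin²φ) / √(a² + b²)`, and `r / (1 + (r² - 1) sin²φ)` has integral `π` over
`[0, π]`.
-/

open Real MeasureTheory

lemma one_add_sub_one_mul_pos {r t : ℝ} (hr : 0 < r) (ht₀ : 0 ≤ t) (ht₁ : t ≤ 1) :
    0 < 1 + (r - 1) * t := by
  rcases ht₀.eq_or_lt with rfl | ht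
  · norm_num
  · nlinarith [mul_pos hr ht]

/-- The continuous branch of `arctan (r tan x)`: by the subtraction formula for `arctan`, it equals
`x + arctan (r tan x) - arctan (tan x)` away from the poles of `tan`. -/
lemma hasDerivAt_add_arctan_sin_mul_cos {r : ℝ} (hr : 0 < r) (x : ℝ) :
    HasDerivAt (fun x ↦ x + arctan ((r - 1) * sin x * cos x / (1 + (r - 1) * sin x ^ 2)))
      (r / (1 + (r ^ 2 - 1) * sin x ^ 2)) x := by
  have hM : 0 < 1 + (r - 1) * sin x ^ 2 :=
    one_add_sub_one_mul_pos hr (sq_nonneg _) (sin_sq_le_one x)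
  have hT : 0 < 1 + (r ^ 2 - 1) * sin x ^ 2 :=
    one_add_sub_one_mul_pos (pow_pos hr 2) (sq_nonneg _) (sin_sq_le_one x)
  have hc := cos_sq_add_sin_sq x
  have hu : HasDerivAt (fun y ↦ (r - 1) * sin y * cos y / (1 + (r - 1) * sin y ^ 2))
      ((r - 1) * (1 - (r + 1) * sin x ^ 2) / (1 + (r - 1) * sin x ^ 2) ^ 2) x := by
    have hnum := ((hasDerivAt_sin x).const_mul (r - 1)).mul (hasDerivAt_cos x)
    have hden := (((hasDerivAt_sin x).pow 2).const_mul (r - 1)).const_add 1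
    refine (hnum.div hden hM.ne').congr_deriv ?_
    norm_num
    congr 1
    linear_combination (r - 1) * (1 - (r - 1) * sin x ^ 2) * hc
  have key : 1 + ((r - 1) * sin x * cos x / (1 + (r - 1) * sin x ^ 2)) ^ 2
      = (1 + (r ^ 2 - 1) * sin x ^ 2) / (1 + (r - 1) * sin x ^ 2) ^ 2 := by
    field_simp
    linear_combination (r - 1) ^ 2 * sin x ^ 2 * hc
  refine ((hasDerivAt_id x).add hu.arctan).congr_deriv ?_
  rw [key, one_div_div, div_mul_div_cancel₀' (pow_ne_zero 2 hM.ne'), one_add_div hT.ne']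
  congr 1
  ring

lemma integral_div_one_add_sq_sub_one_mul_sin_sq {r : ℝ} (hr : 0 < r) :
    ∫ φ in (0 : ℝ)..π, r / (1 + (r ^ 2 - 1) * sin φ ^ 2) = π := by
  have hcont : Continuous fun φ ↦ r / (1 + (r ^ 2 - 1) * sin φ ^ 2) := by
    fun_prop (disch := exact fun φ ↦
      (one_add_sub_one_mul_pos (pow_pos hr 2) (sq_nonneg _) (sin_sq_le_one φ)).ne')
  rw [intervalIntegral.integral_eq_sub_of_hasDerivAt
    (fun φ _ ↦ hasDerivAt_add_arctan_sin_mul_cos hr φ) (hcont.intervalIntegrable _ _)]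
  simp

lemma integral_div_sq_mul_sin_sq_add_sq {a : ℝ} (ha : 0 < a) (b : ℝ) :
    ∫ φ in (0 : ℝ)..π, a / (b ^ 2 * sin φ ^ 2 + a ^ 2) = π / √(a ^ 2 + b ^ 2) := by
  set S := √(a ^ 2 + b ^ 2)
  have hS : 0 < S := by positivity
  have hS2 : S ^ 2 = a ^ 2 + b ^ 2 := sq_sqrt (by positivity)
  calc ∫ φ in (0 : ℝ)..π, a / (b ^ 2 * sin φ ^ 2 + a ^ 2)
      = ∫ φ in (0 : ℝ)..π, S / a / (1 + ((S / a) ^ 2 - 1) * sin φ ^ 2) / S := by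
        congr with φ
        have hD : b ^ 2 * sin φ ^ 2 + a ^ 2 ≠ 0 := by positivity
        have hden : 1 + ((S / a) ^ 2 - 1) * sin φ ^ 2 = (b ^ 2 * sin φ ^ 2 + a ^ 2) / a ^ 2 := by
          rw [div_pow, hS2]
          field_simp
          ring
        rw [hden]
        field_simp
    _ = π / S := by
        rw [intervalIntegral.integral_div, integral_div_one_add_sq_sub_one_mul_sin_sq (div_pos hS ha)]

lemma integral_arctan_mul_sin_mul_sin (c : ℝ) :
    ∫ φ in (0 : ℝ)..π, arctan (c * sin φ) * sin φ
      = ∫ φ in (0 : ℝ)..π, c * cos φ ^ 2 / (1 + c ^ 2 * sin φ ^ 2) := by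
  have hu : ∀ φ, HasDerivAt (fun φ ↦ arctan (c * sin φ))
      (1 / (1 + (c * sin φ) ^ 2) * (c * cos φ)) φ :=
    fun φ ↦ ((hasDerivAt_sin φ).const_mul c).arctan
  have hv : ∀ φ, HasDerivAt (fun φ ↦ -cos φ) (sin φ) φ :=
    fun φ ↦ (hasDerivAt_cos φ).neg.congr_deriv (neg_neg _)
  rw [intervalIntegral.integral_mul_deriv_eq_deriv_mul (fun φ _ ↦ hu φ) (fun φ _ ↦ hv φ)
    (Continuous.intervalIntegrable (by fun_prop (disch := intro; positivity)) _ _)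
    (continuous_sin.intervalIntegrable _ _)]
  simp only [sin_pi, sin_zero, mul_zero, arctan_zero, zero_mul, sub_zero, zero_sub,
    ← intervalIntegral.integral_neg]
  congr with φ
  field_simp

theorem lipschitz_decomposition (a b : ℝ) (ha : 0 < a) (hb : 0 < b) :
    (1 / (π * b)) * (∫ φ in (0:ℝ)..π, Real.arctan (b * Real.sin φ / a) * Real.sin φ)
      + (1 / π) * (∫ φ in (0:ℝ)..π,
          a * Real.sin φ ^ 2 / (b ^ 2 * Real.sin φ ^ 2 + a ^ 2))
      = 1 / Real.sqrt (a ^ 2 + b ^ 2) := by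
  have hD : ∀ φ, b ^ 2 * sin φ ^ 2 + a ^ 2 ≠ 0 := fun φ ↦ by positivity
  have hparts : ∫ φ in (0 : ℝ)..π, arctan (b * sin φ / a) * sin φ
      = b * ∫ φ in (0 : ℝ)..π, a * cos φ ^ 2 / (b ^ 2 * sin φ ^ 2 + a ^ 2) := by
    simp_rw [mul_div_right_comm b, integral_arctan_mul_sin_mul_sin,
      ← intervalIntegral.integral_const_mul]
    congr with φ
    field_simp
    ring
  have hsum : (∫ φ in (0 : ℝ)..π, a * cos φ ^ 2 / (b ^ 2 * sin φ ^ 2 + a ^ 2))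
      + ∫ φ in (0 : ℝ)..π, a * sin φ ^ 2 / (b ^ 2 * sin φ ^ 2 + a ^ 2)
      = ∫ φ in (0 : ℝ)..π, a / (b ^ 2 * sin φ ^ 2 + a ^ 2) := by
    rw [← intervalIntegral.integral_add
      (Continuous.intervalIntegrable (by fun_prop (disch := exact hD)) _ _)
      (Continuous.intervalIntegrable (by fun_prop (disch := exact hD)) _ _)]
    congr with φ
    rw [← add_div, ← mul_add, cos_sq_add_sin_sq, mul_one]
  calc _ = (1 / π) * ((∫ φ in (0 : ℝ)..π, a * cos φ ^ 2 / (b ^ 2 * sin φ ^ 2 + a ^ 2))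
        + ∫ φ in (0 : ℝ)..π, a * sin φ ^ 2 / (b ^ 2 * sin φ ^ 2 + a ^ 2)) := by
        rw [hparts]
        field_simp
    _ = 1 / √(a ^ 2 + b ^ 2) := by
        rw [hsum, integral_div_sq_mul_sin_sq_add_sq ha]
        field_simp
end

section
/- For all real α > 0 and z > 0, ( Γ(α + 1/2)·2^α / (z^α · Γ(1/2)) ) · ∫_0^∞ cos(z t)/(t² + 1)^{α + 1/2} dt = z^{−α} · ∫_0^∞ (2t)^{α−1} · e^{−( t + z²/(4t) )} dt. -/
open Real MeasureTheory Set

/-!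
Write `(t ^ 2 + 1) ^ (-a) = Γ(a)⁻¹ ∫₀^∞ s ^ (a - 1) e^{-(t ^ 2 + 1) s} ds` and exchange the
order of integration, which is legitimate because `(1 + t ^ 2) ^ (-a)` is integrable for
`a > 1/2`. The inner `t`-integral is then the cosine transform of a Gaussian,
`∫₀^∞ cos (z t) e^{-s t ^ 2} dt = √(π / s) / 2 · e^{-z ^ 2 / (4 s)}`.
-/

lemma integral_cos_mul_exp_neg_mul_sq {s : ℝ} (hs : 0 < s) (z : ℝ) :
    ∫ x : ℝ, cos (z * x) * exp (-(s * x ^ 2)) = √(π / s) * exp (-(z ^ 2 / (4 * s))) := by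
  have hs' : 0 < (s : ℂ).re := by simpa using hs
  have hphase (x : ℝ) : Complex.I * z * x = ((z * x : ℝ) : ℂ) * Complex.I := by push_cast; ring
  have hre (x : ℝ) : (Complex.exp (Complex.I * z * x) * Complex.exp (-s * x ^ 2)).re =
      cos (z * x) * exp (-(s * x ^ 2)) := by
    rw [show -(s : ℂ) * x ^ 2 = ((-(s * x ^ 2) : ℝ) : ℂ) by push_cast; ring,
      ← Complex.ofReal_exp, Complex.re_mul_ofReal, hphase, Complex.exp_ofReal_mul_I_re]
  have hint : Integrable fun x : ℝ =>
      Complex.exp (Complex.I * z * x) * Complex.exp (-s * x ^ 2) := by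
    refine (integrable_cexp_neg_mul_sq hs').bdd_mul (c := 1) (by fun_prop) (.of_forall fun x => ?_)
    rw [hphase, Complex.norm_exp_ofReal_mul_I]
  have hval : (π / s : ℂ) ^ (1 / 2 : ℂ) * Complex.exp (-z ^ 2 / (4 * s)) =
      ((√(π / s) * exp (-(z ^ 2 / (4 * s))) : ℝ) : ℂ) := by
    rw [Complex.ofReal_mul, Complex.ofReal_exp, sqrt_eq_rpow, Complex.ofReal_cpow (by positivity)]
    push_cast
    ring_nf
  simp_rw [← hre]
  rw [← Complex.ofReal_re (√(π / s) * exp (-(z ^ 2 / (4 * s)))), ← hval,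
    ← fourierIntegral_gaussian hs']
  exact integral_re hint

lemma integral_Ioi_cos_mul_exp_neg_mul_sq {s : ℝ} (hs : 0 < s) (z : ℝ) :
    ∫ x in Ioi 0, cos (z * x) * exp (-(s * x ^ 2)) =
      √(π / s) / 2 * exp (-(z ^ 2 / (4 * s))) := by
  have h := integral_comp_abs (f := fun x => cos (z * x) * exp (-(s * x ^ 2)))
  have heven (x : ℝ) : cos (z * |x|) = cos (z * x) := by
    rcases abs_choice x with hx | hx <;> simp [hx]
  simp only [sq_abs, heven, integral_cos_mul_exp_neg_mul_sq hs] at h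
  linarith

lemma integrableOn_rpow_mul_exp_neg_mul_Ioi {a r : ℝ} (ha : 0 < a) (hr : 0 < r) :
    IntegrableOn (fun s : ℝ => s ^ (a - 1) * exp (-(r * s))) (Ioi 0) := by
  simpa only [rpow_one, neg_mul] using
    integrableOn_rpow_mul_exp_neg_mul_rpow (s := a - 1) (p := 1) (b := r) (by linarith) one_pos hr

lemma integrable_one_add_sq_rpow_neg {a : ℝ} (ha : 1 / 2 < a) :
    Integrable fun t : ℝ => (1 + t ^ 2) ^ (-a) := by
  have h := integrable_rpow_neg_one_add_norm_sq (E := ℝ) (μ := volume) (r := 2 * a)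
    (by simp only [Module.finrank_self, Nat.cast_one]; linarith)
  simpa only [norm_eq_abs, sq_abs, show -(2 * a) / 2 = -a by ring] using h

lemma integrable_prod_rpow_mul_exp_neg_sq_add_one_mul {a : ℝ} (ha : 1 / 2 < a) :
    Integrable (fun p : ℝ × ℝ => p.2 ^ (a - 1) * exp (-((p.1 ^ 2 + 1) * p.2)))
      ((volume.restrict (Ioi 0)).prod (volume.restrict (Ioi 0))) := by
  have hslice (t : ℝ) := integrableOn_rpow_mul_exp_neg_mul_Ioi (r := t ^ 2 + 1) (by linarith)
    (by positivity)
  have hnorm (t : ℝ) : ∫ s in Ioi 0, ‖s ^ (a - 1) * exp (-((t ^ 2 + 1) * s))‖ =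
      Gamma a * (1 + t ^ 2) ^ (-a) := by
    rw [setIntegral_congr_fun measurableSet_Ioi fun s (hs : 0 < s) =>
      norm_of_nonneg (by positivity),
      integral_rpow_mul_exp_neg_mul_Ioi (by linarith) (by positivity), one_div,
      inv_rpow (by positivity), ← rpow_neg (by positivity), add_comm, mul_comm]
  refine (integrable_prod_iff (by fun_prop)).2 ⟨.of_forall hslice, ?_⟩
  simp only [hnorm]
  exact ((integrable_one_add_sq_rpow_neg ha).const_mul _).restrict

theorem Gamma_mul_integral_Ioi_cos_mul_div_rpow {a : ℝ} (ha : 1 / 2 < a) (z : ℝ) :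
    Gamma a * ∫ t in Ioi 0, cos (z * t) / (t ^ 2 + 1) ^ a =
      √π / 2 * ∫ s in Ioi 0, s ^ (a - 3 / 2) * exp (-(s + z ^ 2 / (4 * s))) := by
  set K : ℝ → ℝ → ℝ := fun t s => cos (z * t) * (s ^ (a - 1) * exp (-((t ^ 2 + 1) * s)))
  have hK : Integrable (Function.uncurry K)
      ((volume.restrict (Ioi 0)).prod (volume.restrict (Ioi 0))) :=
    (integrable_prod_rpow_mul_exp_neg_sq_add_one_mul ha).bdd_mul (c := 1) (by fun_prop)
      (.of_forall fun p => by simpa using abs_cos_le_one (z * p.1))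
  have hGamma (t : ℝ) : Gamma a * (cos (z * t) / (t ^ 2 + 1) ^ a) = ∫ s in Ioi 0, K t s := by
    rw [integral_const_mul, integral_rpow_mul_exp_neg_mul_Ioi (by linarith) (by positivity),
      div_rpow zero_le_one (by positivity), one_rpow]
    ring
  have hGauss (s : ℝ) (hs : 0 < s) : ∫ t in Ioi 0, K t s =
      √π / 2 * (s ^ (a - 3 / 2) * exp (-(s + z ^ 2 / (4 * s)))) := by
    have hsplit (t : ℝ) :
        K t s = s ^ (a - 1) * exp (-s) * (cos (z * t) * exp (-(s * t ^ 2))) := by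
      simp only [K]
      rw [show -((t ^ 2 + 1) * s) = -s + -(s * t ^ 2) by ring, exp_add]
      ring
    have hpow : s ^ (a - 1) = s ^ (a - 3 / 2) * √s := by
      rw [sqrt_eq_rpow, ← rpow_add hs]
      ring_nf
    simp_rw [hsplit]
    rw [integral_const_mul, integral_Ioi_cos_mul_exp_neg_mul_sq hs, sqrt_div' _ hs.le, hpow,
      neg_add, exp_add]
    field_simp
  calc Gamma a * ∫ t in Ioi 0, cos (z * t) / (t ^ 2 + 1) ^ a
      = ∫ t in Ioi 0, ∫ s in Ioi 0, K t s := by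
        rw [← integral_const_mul]
        simp_rw [hGamma]
    _ = ∫ s in Ioi 0, ∫ t in Ioi 0, K t s := integral_integral_swap hK
    _ = √π / 2 * ∫ s in Ioi 0, s ^ (a - 3 / 2) * exp (-(s + z ^ 2 / (4 * s))) := by
        rw [setIntegral_congr_fun measurableSet_Ioi hGauss, integral_const_mul]

theorem basset_exponential_representation (α z : ℝ) (hα : 0 < α) (hz : 0 < z) :
    (Real.Gamma (α + 1/2) * 2 ^ α / (z ^ α * Real.Gamma (1/2))) *
        ∫ t in Set.Ioi (0:ℝ), Real.cos (z * t) / (t ^ 2 + 1) ^ (α + 1/2)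
      = z ^ (-α) *
        ∫ t in Set.Ioi (0:ℝ), (2 * t) ^ (α - 1) * Real.exp (-(t + z ^ 2 / (4 * t))) := by
  have hGamma := Gamma_mul_integral_Ioi_cos_mul_div_rpow (a := α + 1 / 2) (by linarith) z
  rw [show α + 1 / 2 - 3 / 2 = α - 1 by ring] at hGamma
  have hscale : ∫ t in Ioi 0, (2 * t) ^ (α - 1) * exp (-(t + z ^ 2 / (4 * t))) =
      2 ^ (α - 1) * ∫ t in Ioi 0, t ^ (α - 1) * exp (-(t + z ^ 2 / (4 * t))) := by
    rw [← integral_const_mul]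
    refine setIntegral_congr_fun measurableSet_Ioi fun t (ht : 0 < t) => ?_
    rw [mul_rpow zero_le_two ht.le, mul_assoc]
  calc Gamma (α + 1 / 2) * 2 ^ α / (z ^ α * Gamma (1 / 2)) *
        ∫ t in Ioi 0, cos (z * t) / (t ^ 2 + 1) ^ (α + 1 / 2)
      = 2 ^ α / (z ^ α * √π) * (Gamma (α + 1 / 2) *
          ∫ t in Ioi 0, cos (z * t) / (t ^ 2 + 1) ^ (α + 1 / 2)) := by
        rw [Gamma_one_half_eq]; ring
    _ = z ^ (-α) * ∫ t in Ioi 0, (2 * t) ^ (α - 1) * exp (-(t + z ^ 2 / (4 * t))) := by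
        rw [hGamma, hscale, rpow_neg hz.le, rpow_sub_one two_ne_zero]
        generalize ∫ t in Ioi 0, t ^ (α - 1) * exp (-(t + z ^ 2 / (4 * t))) = J
        field_simp
end
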